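/- arXiv:2009.12231 — 3 statements merged into one kernel-verified Lean document; each statement's English description precedes it below -/
import Mathlib

section
/- Let K ≥ 2, 1 ≤ t < K, and t ≤ α ≤ K - t. With the cyclic placement matrix V[p,k] = 1 iff (k-p) mod K ∈ {0,…,t-1}, define for each j ∈ [K-t] and round r ∈ [K] the user vector k_j^r = (k_j¹ + r) % K and packet vector p_j^r = (p_j¹ + r) % K (componentwise, with a % b = ((a-1) mod b)+1), where k_j¹ = [[1:t]; (([1:α]+j-1)%(K-t))+t] and p_j¹ = [((t+j-[1:t])%(K-t))+[1:t]; e(α)] with e(α) the all-ones vector of length α. Then for every n ∈ [t+α], V[p_j^r[n], k_j^r[n]] = 0. -/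
/-!
`V K t p k` only sees `k - p` modulo `K`, and in round `r` both index vectors are the round-one
vectors shifted by `r`, so it suffices to treat round one. There, with `m = pmod _ (K - t)` in
`[1, K - t]`, the difference `k - p` is `-m` for the first `t` entries and `m + t - 1` for the
others; both are congruent to a number in `[t, K - 1]`.
-/

/-- The mod operator with offset one. -/
def pmod (a b : ℕ) : ℕ := (a - 1) % b + 1

/-- The cyclic placement matrix: `V K t p k = 1` iff `(k - p) mod K ∈ {0,…,t-1}`. -/
noncomputable def V (K t p k : ℕ) : ℕ :=
  if ((k : ℤ) - (p : ℤ)) % (K : ℤ) ∈ Finset.Ico (0 : ℤ) (t : ℤ) then 1 else 0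

/-- Entry `n` of the round-1 user index vector `k_j¹`. -/
def kvec1 (K t j n : ℕ) : ℕ :=
  if n ≤ t then n else pmod (n - t + j - 1) (K - t) + t

/-- Entry `n` of the round-1 packet index vector `p_j¹`. -/
def pvec1 (K t j n : ℕ) : ℕ :=
  if n ≤ t then pmod (t + j - n) (K - t) + n else 1

/-- Entry `n` of the round-`r` user index vector `k_j^r = (k_j¹ + r) % K`. -/
def kvec (K t j r n : ℕ) : ℕ := pmod (kvec1 K t j n + r) K

/-- Entry `n` of the round-`r` packet index vector `p_j^r = (p_j¹ + r) % K`. -/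
def pvec (K t j r n : ℕ) : ℕ := pmod (pvec1 K t j n + r) K

section pmod

variable {a b : ℕ}

lemma one_le_pmod : 1 ≤ pmod a b := Nat.le_add_left 1 _

lemma pmod_le (hb : 0 < b) : pmod a b ≤ b := Nat.mod_lt _ hb

lemma pmod_modEq (ha : 0 < a) : (pmod a b : ℤ) ≡ a [ZMOD b] := by
  rw [Int.natCast_modEq_iff]
  calc pmod a b ≡ a - 1 + 1 [MOD b] := (Nat.mod_modEq _ _).add_right 1
    _ = a := Nat.sub_add_cancel ha

end pmod

section V

variable {K t p k p' k' : ℕ}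

lemma V_congr (h : (k : ℤ) - p ≡ k' - p' [ZMOD K]) : V K t p k = V K t p' k' := by
  rw [V, V, h.eq]

lemma V_eq_zero_of_modEq {d : ℤ} (h : (k : ℤ) - p ≡ d [ZMOD K]) (htd : t ≤ d) (hdK : d < K) :
    V K t p k = 0 := by
  have hd : ((k : ℤ) - p) % K = d := by rw [h.eq, Int.emod_eq_of_lt (by omega) hdK]
  rw [V, if_neg]
  simp only [hd, Finset.mem_Ico, not_and, not_lt]
  exact fun _ ↦ htd

lemma V_pmod_add_pmod_add {r : ℕ} (hr : 0 < r) :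
    V K t (pmod (p + r) K) (pmod (k + r) K) = V K t p k := by
  apply V_congr
  have h := (pmod_modEq (b := K) (by omega : 0 < k + r)).sub
    (pmod_modEq (b := K) (by omega : 0 < p + r))
  simpa using h

end V

lemma V_pvec1_kvec1 {K t j n : ℕ} (htK : t < K) : V K t (pvec1 K t j n) (kvec1 K t j n) = 0 := by
  have hKt : 0 < K - t := by omega
  by_cases hnt : n ≤ t
  · set m := pmod (t + j - n) (K - t)
    have hm : 1 ≤ m ∧ m ≤ K - t := ⟨one_le_pmod, pmod_le hKt⟩
    simp only [kvec1, pvec1, if_pos hnt]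
    refine V_eq_zero_of_modEq (d := K - m) (Int.modEq_iff_dvd.mpr ⟨1, by push_cast; ring⟩) ?_ ?_
      <;> omega
  · set m := pmod (n - t + j - 1) (K - t)
    have hm : 1 ≤ m ∧ m ≤ K - t := ⟨one_le_pmod, pmod_le hKt⟩
    simp only [kvec1, pvec1, if_neg hnt]
    refine V_eq_zero_of_modEq (d := m + t - 1) (by push_cast; rfl) ?_ ?_ <;> omega

theorem delivery_targets_uncached_general (K t α : ℕ) (htK : t < K) :
    ∀ j ∈ Finset.Icc 1 (K - t), ∀ r ∈ Finset.Icc 1 K, ∀ n ∈ Finset.Icc 1 (t + α),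
      V K t (pvec K t j r n) (kvec K t j r n) = 0 := by
  intro j _ r hr n _
  rw [pvec, kvec, V_pmod_add_pmod_add (Finset.mem_Icc.mp hr).1]
  exact V_pvec1_kvec1 htK

theorem delivery_targets_uncached (K t α : ℕ) (hK : 2 ≤ K) (ht : 1 ≤ t) (htK : t < K)
    (htα : t ≤ α) (hαK : α ≤ K - t) :
    ∀ j ∈ Finset.Icc 1 (K - t), ∀ r ∈ Finset.Icc 1 K, ∀ n ∈ Finset.Icc 1 (t + α),
      V K t (pvec K t j r n) (kvec K t j r n) = 0 :=
  delivery_targets_uncached_general K t α htK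
end

section
/- Let K ≥ 2, 1 ≤ t < K, and t ≤ α ≤ K - t. With the cyclic-caching user and packet index vectors k_j^r and p_j^r defined as in the scheme (k_j¹ = [[1:t]; (([1:α]+j-1)%(K-t))+t], p_j¹ = [((t+j-[1:t])%(K-t))+[1:t]; e(α)], and k_j^r = (k_j¹+r)%K, p_j^r = (p_j¹+r)%K), for every pair (p,k) with V[p,k] = 0 the number of triples (j, r, n) ∈ [K-t] × [K] × [t+α] with p = p_j^r[n] and k = k_j^r[n] is exactly t + α. -/
/-!
Fix the entry index `n`. Since `p_j^r[n]` and `k_j^r[n]` are `p_j¹[n]` and `k_j¹[n]` shifted by the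
same `r`, the pair `(p, k)` is hit by `(j, r)` iff `r ≡ k - k_j¹[n]` and
`k_j¹[n] - p_j¹[n] ≡ k - p (mod K)`; the first congruence has one solution `r ∈ [1, K]`. The
difference `k_j¹[n] - p_j¹[n]` is `-pmod (t - n + j) (K - t)` for `n ≤ t` and
`pmod (n - t - 1 + j) (K - t) + t - 1` for `n > t`, so as `j` runs over `[1, K - t]` it takes
each of the residues `t, …, K - 1` exactly once, and `V[p, k] = 0` says that `k - p` is one of
them. Hence every `n` contributes exactly one triple.
-/

open Finset

lemma natCast_pmod {a : ℕ} (b : ℕ) (ha : 1 ≤ a) : ((pmod a b : ℕ) : ZMod b) = a := by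
  rw [pmod, Nat.cast_add, ZMod.natCast_mod, Nat.cast_sub ha, Nat.cast_one, sub_add_cancel]

lemma pmod_mem_Icc (a : ℕ) {b : ℕ} (hb : 0 < b) : pmod a b ∈ Icc 1 b := by
  have := Nat.mod_lt (a - 1) hb
  simp only [pmod, mem_Icc]
  omega

lemma natCast_eq_natCast_iff_of_mem_Icc {x y b : ℕ} (hx : x ∈ Icc 1 b) (hy : y ∈ Icc 1 b) :
    (x : ZMod b) = y ↔ x = y := by
  rw [mem_Icc] at hx hy
  refine ⟨fun h => ?_, congrArg _⟩
  rw [ZMod.natCast_eq_natCast_iff, ← Nat.sub_add_cancel hx.1, ← Nat.sub_add_cancel hy.1] at h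
  have := (Nat.ModEq.add_right_cancel' 1 h).eq_of_lt_of_lt (by omega) (by omega)
  omega

lemma pmod_eq_iff {a b x : ℕ} (ha : 1 ≤ a) (hx : x ∈ Icc 1 b) :
    pmod a b = x ↔ (a : ZMod b) = x := by
  have hb : 0 < b := by rw [mem_Icc] at hx; omega
  rw [← natCast_eq_natCast_iff_of_mem_Icc (pmod_mem_Icc a hb) hx, natCast_pmod b ha]

lemma card_filter_natCast_eq {b : ℕ} (hb : 0 < b) (y : ZMod b) :
    #{x ∈ Icc 1 b | ((x : ℕ) : ZMod b) = y} = 1 := by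
  have : NeZero b := ⟨hb.ne'⟩
  have hy : ((y.val + b : ℕ) : ZMod b) = y := by simp
  rw [card_eq_one]
  -- not `pmod y.val b`: `pmod 0 b = 1`
  refine ⟨pmod (y.val + b) b, ?_⟩
  ext x
  rw [mem_filter, mem_singleton]
  constructor
  · rintro ⟨hx, rfl⟩
    rw [eq_comm, pmod_eq_iff (by omega) hx, hy]
  · rintro rfl
    exact ⟨pmod_mem_Icc _ hb, by rw [natCast_pmod b (by omega), hy]⟩

lemma card_filter_pmod_add_eq {b : ℕ} (hb : 0 < b) (c : ℕ) {x : ℕ} (hx : x ∈ Icc 1 b) :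
    #{j ∈ Icc 1 b | pmod (c + j) b = x} = 1 := by
  convert card_filter_natCast_eq hb ((x : ZMod b) - c) using 2
  refine filter_congr fun j hj => ?_
  rw [pmod_eq_iff (by rw [mem_Icc] at hj; omega) hx, Nat.cast_add, eq_sub_iff_add_eq']

lemma card_filter_product_product {α β γ : Type*} (s : Finset α) (t : Finset β) (u : Finset γ)
    (P : α × β × γ → Prop) [DecidablePred P] :
    #{x ∈ s ×ˢ t ×ˢ u | P x} = ∑ c ∈ u, ∑ a ∈ s, #{b ∈ t | P (a, b, c)} := by
  simp only [card_filter, sum_product]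
  exact (sum_congr rfl fun _ _ => sum_comm).trans sum_comm

lemma card_filter_pmod_add_eq_and_pmod_add_eq {K p k : ℕ} (hK : 0 < K) (a b : ℕ)
    (hp : p ∈ Icc 1 K) (hk : k ∈ Icc 1 K) :
    #{r ∈ Icc 1 K | p = pmod (a + r) K ∧ k = pmod (b + r) K} =
      if (b : ZMod K) - a = k - p then 1 else 0 := by
  have hiff : ∀ r ∈ Icc 1 K, (p = pmod (a + r) K ∧ k = pmod (b + r) K) ↔
      ((r : ZMod K) = p - a ∧ (b : ZMod K) - a = k - p) := by
    intro r hr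
    rw [mem_Icc] at hr
    rw [eq_comm, pmod_eq_iff (by omega) hp, eq_comm (a := k), pmod_eq_iff (by omega) hk]
    push_cast
    constructor
    · rintro ⟨hp, hk⟩
      exact ⟨by linear_combination hp, by linear_combination hk - hp⟩
    · rintro ⟨hr, hba⟩
      exact ⟨by linear_combination hr, by linear_combination hr + hba⟩
  rw [filter_congr hiff]
  split_ifs with hba
  · simpa only [hba, and_true] using card_filter_natCast_eq hK _
  · simp only [hba, and_false, filter_false, card_empty]

lemma card_filter_kvec1_sub_pvec1_eq {K t : ℕ} (htK : t < K) (n : ℕ) {D : ℕ} (htD : t ≤ D)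
    (hDK : D < K) :
    #{j ∈ Icc 1 (K - t) | (kvec1 K t j n : ZMod K) - pvec1 K t j n = D} = 1 := by
  have hM : 0 < K - t := by omega
  have hP : ∀ c, pmod c (K - t) ∈ Icc 1 (K - t) := fun c => pmod_mem_Icc c hM
  by_cases hn : n ≤ t
  · convert card_filter_pmod_add_eq hM (t - n) (x := K - D) (by rw [mem_Icc]; omega) using 2
    refine filter_congr fun j hj => ?_
    have hj1 := (mem_Icc.1 hj).1
    have hPj := mem_Icc.1 (hP (t - n + j))
    rw [kvec1, pvec1, if_pos hn, if_pos hn, show t + j - n = t - n + j by omega,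
      ← natCast_eq_natCast_iff_of_mem_Icc (b := K) (by rw [mem_Icc]; omega)
        (by rw [mem_Icc]; omega), Nat.cast_sub hDK.le, ZMod.natCast_self]
    push_cast
    constructor <;> intro h <;> linear_combination -h
  · convert card_filter_pmod_add_eq hM (n - t - 1) (x := D + 1 - t) (by rw [mem_Icc]; omega)
      using 2
    refine filter_congr fun j hj => ?_
    have hj1 := (mem_Icc.1 hj).1
    have hPj := mem_Icc.1 (hP (n - t - 1 + j))
    rw [kvec1, pvec1, if_neg hn, if_neg hn, show n - t + j - 1 = n - t - 1 + j by omega,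
      Nat.cast_one, sub_eq_iff_eq_add, ← Nat.cast_succ,
      natCast_eq_natCast_iff_of_mem_Icc (by rw [mem_Icc]; omega) (by rw [mem_Icc]; omega)]
    omega

lemma exists_natCast_eq_sub_of_V_eq_zero {K t p k : ℕ} (hK : 0 < K) (hV : V K t p k = 0) :
    ∃ D, t ≤ D ∧ D < K ∧ (D : ZMod K) = k - p := by
  unfold V at hV
  split_ifs at hV with hD
  rw [mem_Ico, not_and_or, not_le, not_lt] at hD
  have h0 := Int.emod_nonneg ((k : ℤ) - p) (by omega : (K : ℤ) ≠ 0)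
  have hlt := Int.emod_lt_of_pos ((k : ℤ) - p) (by omega : (0 : ℤ) < K)
  refine ⟨(((k : ℤ) - p) % K).toNat, by omega, by omega, ?_⟩
  rw [← Int.cast_natCast, Int.toNat_of_nonneg h0, ZMod.intCast_mod]
  push_cast
  rfl

lemma sum_card_filter_pvec_kvec_eq_one {K t p k D : ℕ} (htK : t < K) (n : ℕ)
    (hp : p ∈ Icc 1 K) (hk : k ∈ Icc 1 K) (htD : t ≤ D) (hDK : D < K)
    (hD : (D : ZMod K) = k - p) :
    ∑ j ∈ Icc 1 (K - t), #{r ∈ Icc 1 K | p = pvec K t j r n ∧ k = kvec K t j r n} = 1 := by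
  calc _ = ∑ j ∈ Icc 1 (K - t),
          if (kvec1 K t j n : ZMod K) - pvec1 K t j n = k - p then 1 else 0 :=
        sum_congr rfl fun j _ => card_filter_pmod_add_eq_and_pmod_add_eq (by omega) _ _ hp hk
    _ = 1 := by
      rw [← card_filter, ← hD]
      exact card_filter_kvec1_sub_pvec1_eq htK n htD hDK

theorem delivery_counting_general (K t α : ℕ) (htK : t < K) :
    ∀ p ∈ Finset.Icc 1 K, ∀ k ∈ Finset.Icc 1 K, V K t p k = 0 →
      ((Finset.Icc 1 (K - t) ×ˢ Finset.Icc 1 K ×ˢ Finset.Icc 1 (t + α)).filter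
          (fun x => p = pvec K t x.1 x.2.1 x.2.2 ∧ k = kvec K t x.1 x.2.1 x.2.2)).card
        = t + α := by
  intro p hp k hk hV
  obtain ⟨D, htD, hDK, hD⟩ := exists_natCast_eq_sub_of_V_eq_zero (by omega) hV
  rw [card_filter_product_product]
  simp only [sum_card_filter_pvec_kvec_eq_one htK _ hp hk htD hDK hD, sum_const, smul_eq_mul,
    mul_one, Nat.card_Icc, Nat.add_sub_cancel]

theorem delivery_counting (K t α : ℕ) (hK : 2 ≤ K) (ht : 1 ≤ t) (htK : t < K)
    (htα : t ≤ α) (hαK : α ≤ K - t) :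
    ∀ p ∈ Finset.Icc 1 K, ∀ k ∈ Finset.Icc 1 K, V K t p k = 0 →
      ((Finset.Icc 1 (K - t) ×ˢ Finset.Icc 1 K ×ˢ Finset.Icc 1 (t + α)).filter
          (fun x => p = pvec K t x.1 x.2.1 x.2.2 ∧ k = kvec K t x.1 x.2.1 x.2.2)).card
        = t + α :=
  delivery_counting_general K t α htK
end

section
/- Let K ≥ 2, 1 ≤ t < K, t ≤ α ≤ K - t. Fix a pair (p,k) with V[p,k] = 0, where V is the cyclic placement matrix. Then there exists exactly one round r ∈ [K] such that k appears among the last α entries of some user vector k_j^r with corresponding packet index p, namely the entries arising from the horizontal-shift (second) component; and in that round there are exactly α transmission indices j ∈ [K-t] delivering packet p to user k. -/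
/-! On the horizontal entries `n > t` the packet index `p_j^r = r mod K + 1` depends neither on
`j` nor on `n`, so it singles out the round `r ≡ p - 1 (mod K)`. In that round entry `n` of
transmission `j` serves user `((n - t - 1 + j - 1) mod (K - t) + t + r) mod K + 1`, which is `k`
exactly when `(n - t - 1) + (j - 1) ≡ d - t (mod K - t)`, where `d = (k - p) mod K ≥ t` because
`V[p,k] = 0`. Each of the `α` entries `n` yields one such `j`, and distinct entries yield distinct
`j` because `α ≤ K - t`. -/

open Finset

lemma pvec_of_lt {K t j r n : ℕ} (hn : t < n) : pvec K t j r n = r % K + 1 := by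
  rw [pvec, pvec1, if_neg (by omega), pmod, Nat.add_sub_cancel_left]

lemma kvec_of_lt {K t j r n : ℕ} (hn : t < n) (hj : 1 ≤ j) :
    kvec K t j r n = ((n - t - 1 + (j - 1)) % (K - t) + t + r) % K + 1 := by
  rw [kvec, kvec1, if_neg (by omega), pmod, pmod,
    show n - t + j - 1 - 1 = n - t - 1 + (j - 1) by omega]
  congr 2
  omega

lemma le_mod_of_V_eq_zero {K t p k : ℕ} (hp : p ≤ K) (h : V K t p k = 0) :
    t ≤ (k + K - p) % K := by
  have hcast : ((k : ℤ) - p) % K = (((k + K - p) % K : ℕ) : ℤ) := by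
    push_cast [Nat.cast_sub (by omega : p ≤ k + K)]
    rw [show (k : ℤ) + K - p = k - p + K by ring, Int.add_emod_right]
  rw [V, hcast] at h
  split_ifs at h with hmem
  simp only [mem_Ico, not_and, not_lt] at hmem
  exact_mod_cast hmem (by positivity)

lemma eq_mod_iff_natCast_eq {q a b : ℕ} (ha : a < q) : a = b % q ↔ (a : ZMod q) = b := by
  rw [ZMod.natCast_eq_natCast_iff', Nat.mod_eq_of_lt ha]

lemma add_mod_eq_iff {q a b c : ℕ} (ha : a ≤ q) (hb : b < q) (hc : c < q) :
    (a + b) % q = c ↔ b = (c + q - a) % q := by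
  rw [eq_comm, eq_mod_iff_natCast_eq hc, eq_mod_iff_natCast_eq hb]
  push_cast [Nat.cast_sub (by omega : a ≤ c + q), ZMod.natCast_self]
  constructor <;> intro h <;> linear_combination -h

lemma eq_mod_add_add_one_iff {K y r p k : ℕ} (hy : y < K) (hr : r % K + 1 = p)
    (hk : k ∈ Icc 1 K) : k = (y + r) % K + 1 ↔ y = (k + K - p) % K := by
  obtain ⟨hk1, hkK⟩ := mem_Icc.1 hk
  have hpK : p ≤ K := hr ▸ Nat.mod_lt r (by omega)
  have hrp : (r : ZMod K) = p - 1 := by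
    rw [← ZMod.natCast_mod, ← hr]
    push_cast
    ring
  rw [show k = (y + r) % K + 1 ↔ k - 1 = (y + r) % K by omega,
    eq_mod_iff_natCast_eq (by omega), eq_mod_iff_natCast_eq hy]
  push_cast [Nat.cast_sub hk1, Nat.cast_sub (by omega : p ≤ k + K), ZMod.natCast_self, hrp]
  constructor <;> intro h <;> linear_combination -h

lemma card_filter_exists_add_mod_eq {q α c : ℕ} (hα : α ≤ q) (hc : c < q) :
    #{j ∈ Icc 1 q | ∃ a < α, (a + (j - 1)) % q = c} = α := by
  have hq : 0 < q := by omega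
  have himage : {j ∈ Icc 1 q | ∃ a < α, (a + (j - 1)) % q = c} =
      (range α).image fun a => (c + q - a) % q + 1 := by
    ext j
    simp only [mem_filter, mem_Icc, mem_image, mem_range]
    constructor
    · rintro ⟨⟨hj1, hjq⟩, a, ha, h⟩
      exact ⟨a, ha, by rw [← (add_mod_eq_iff (by omega) (by omega) hc).1 h]; omega⟩
    · rintro ⟨a, ha, rfl⟩
      have := Nat.mod_lt (c + q - a) hq
      exact ⟨⟨by omega, by omega⟩, a, ha, (add_mod_eq_iff (by omega) (by omega) hc).2 (by simp)⟩
  rw [himage, card_image_of_injOn, card_range]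
  intro a ha b hb hab
  simp only [coe_range, Set.mem_Iio] at ha hb hab
  set m := (c + q - a) % q
  have hm : m < q := Nat.mod_lt _ hq
  have ha' : (m + a) % q = c := by rw [add_comm, add_mod_eq_iff (by omega) hm hc]
  have hb' : (m + b) % q = c := by rw [add_comm, add_mod_eq_iff (by omega) hm hc]; omega
  rw [add_mod_eq_iff hm.le (by omega) hc] at ha' hb'
  rw [ha', hb']

lemma card_filter_mod_add_one_eq {K p : ℕ} (hp : p ∈ Icc 1 K) :
    #{r ∈ Icc 1 K | r % K + 1 = p} = 1 := by
  rw [mem_Icc] at hp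
  rw [card_eq_one]
  refine ⟨if p = 1 then K else p - 1, ?_⟩
  ext r
  simp only [mem_filter, mem_Icc, mem_singleton]
  constructor
  · rintro ⟨⟨hr1, hrK⟩, rfl⟩
    obtain rfl | hrK := hrK.eq_or_lt
    · simp
    · rw [Nat.mod_eq_of_lt hrK, if_neg (by omega)]
      omega
  · rintro rfl
    split_ifs with h1
    · rw [Nat.mod_self]
      omega
    · rw [Nat.mod_eq_of_lt (by omega)]
      omega

lemma eq_pvec_and_eq_kvec_iff {K t p k r j n : ℕ} (htK : t < K) (hp : p ≤ K) (hk : k ∈ Icc 1 K)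
    (hzero : V K t p k = 0) (hj : 1 ≤ j) (hn : t < n) :
    (p = pvec K t j r n ∧ k = kvec K t j r n) ↔
      r % K + 1 = p ∧ (n - t - 1 + (j - 1)) % (K - t) = (k + K - p) % K - t := by
  rw [pvec_of_lt hn, kvec_of_lt hn hj, eq_comm (a := p)]
  refine and_congr_right fun hr => ?_
  have := Nat.mod_lt (n - t - 1 + (j - 1)) (by omega : 0 < K - t)
  rw [eq_mod_add_add_one_iff (by omega) hr hk]
  have := le_mod_of_V_eq_zero hp hzero
  omega

lemma card_filter_eq_pvec_and_eq_kvec {K t α p k r : ℕ} (htK : t < K) (hαK : α ≤ K - t)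
    (hp : p ≤ K) (hk : k ∈ Icc 1 K) (hzero : V K t p k = 0) (hr : r % K + 1 = p) :
    #{j ∈ Icc 1 (K - t) | ∃ n ∈ Icc (t + 1) (t + α),
      p = pvec K t j r n ∧ k = kvec K t j r n} = α := by
  have hc : (k + K - p) % K - t < K - t := by
    have := Nat.mod_lt (k + K - p) (by omega : 0 < K)
    have := le_mod_of_V_eq_zero hp hzero
    omega
  refine (congrArg card (filter_congr fun j hj => ?_)).trans (card_filter_exists_add_mod_eq hαK hc)
  have hj1 : 1 ≤ j := (mem_Icc.1 hj).1
  constructor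
  · rintro ⟨n, hn, h⟩
    obtain ⟨hn1, hn2⟩ := mem_Icc.1 hn
    exact ⟨n - t - 1, by omega, ((eq_pvec_and_eq_kvec_iff htK hp hk hzero hj1 (by omega)).1 h).2⟩
  · rintro ⟨a, ha, h⟩
    refine ⟨a + t + 1, mem_Icc.2 ⟨by omega, by omega⟩,
      (eq_pvec_and_eq_kvec_iff htK hp hk hzero hj1 (by omega)).2 ⟨hr, ?_⟩⟩
    rwa [show a + t + 1 - t - 1 = a by omega]

theorem horizontal_component_counting_general (K t α : ℕ) (ht : 1 ≤ t) (htK : t < K)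
    (htα : t ≤ α) (hαK : α ≤ K - t) (p k : ℕ) (hp : p ∈ Finset.Icc 1 K)
    (hk : k ∈ Finset.Icc 1 K) (hzero : V K t p k = 0) :
    ((Finset.Icc 1 K).filter (fun r => ∃ j ∈ Finset.Icc 1 (K - t),
        ∃ n ∈ Finset.Icc (t + 1) (t + α),
          p = pvec K t j r n ∧ k = kvec K t j r n)).card = 1 ∧
    ∀ r ∈ Finset.Icc 1 K,
      (∃ j ∈ Finset.Icc 1 (K - t), ∃ n ∈ Finset.Icc (t + 1) (t + α),
          p = pvec K t j r n ∧ k = kvec K t j r n) →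
      ((Finset.Icc 1 (K - t)).filter (fun j => ∃ n ∈ Finset.Icc (t + 1) (t + α),
          p = pvec K t j r n ∧ k = kvec K t j r n)).card = α := by
  have hpK : p ≤ K := (mem_Icc.1 hp).2
  have hround : ∀ r, (∃ j ∈ Icc 1 (K - t), ∃ n ∈ Icc (t + 1) (t + α),
      p = pvec K t j r n ∧ k = kvec K t j r n) ↔ r % K + 1 = p := by
    intro r
    constructor
    · rintro ⟨j, -, n, hn, hpv, -⟩
      rw [hpv, pvec_of_lt (mem_Icc.1 hn).1]
    · intro hr
      refine filter_nonempty_iff.1 (card_pos.1 ?_)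
      rw [card_filter_eq_pvec_and_eq_kvec htK hαK hpK hk hzero hr]
      omega
  refine ⟨?_, fun r _ h => card_filter_eq_pvec_and_eq_kvec htK hαK hpK hk hzero ((hround r).1 h)⟩
  rw [filter_congr fun r _ => hround r]
  exact card_filter_mod_add_one_eq hp

theorem horizontal_component_counting (K t α : ℕ) (hK : 2 ≤ K) (ht : 1 ≤ t) (htK : t < K)
    (htα : t ≤ α) (hαK : α ≤ K - t) (p k : ℕ) (hp : p ∈ Finset.Icc 1 K)
    (hk : k ∈ Finset.Icc 1 K) (hzero : V K t p k = 0) :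
    ((Finset.Icc 1 K).filter (fun r => ∃ j ∈ Finset.Icc 1 (K - t),
        ∃ n ∈ Finset.Icc (t + 1) (t + α),
          p = pvec K t j r n ∧ k = kvec K t j r n)).card = 1 ∧
    ∀ r ∈ Finset.Icc 1 K,
      (∃ j ∈ Finset.Icc 1 (K - t), ∃ n ∈ Finset.Icc (t + 1) (t + α),
          p = pvec K t j r n ∧ k = kvec K t j r n) →
      ((Finset.Icc 1 (K - t)).filter (fun j => ∃ n ∈ Finset.Icc (t + 1) (t + α),
          p = pvec K t j r n ∧ k = kvec K t j r n)).card = α :=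
  horizontal_component_counting_general K t α ht htK htα hαK p k hp hk hzero
end
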